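/- arXiv:1601.06183 — 2 statements merged into one kernel-verified Lean document; each statement's English description precedes it below -/
import Mathlib

section
/- Soundness of the differential cut axiom DC at the semantic level: let Sol be a set of functions φ : [0, r_φ] → S (solutions of a fixed differential equation from a fixed initial state, closed under restriction to initial subintervals [0,s] for 0 ≤ s ≤ r_φ), and let Q, R, P be predicates on S. Suppose every φ ∈ Sol that satisfies Q at all times also satisfies R at its endpoint. Then: every φ ∈ Sol satisfying Q at all times has P at its endpoint if and only if every φ ∈ Sol satisfying Q ∧ R at all times has P at its endpoint. -/
open Set

theorem forall_mem_Icc_of_restrict_endpoint {S : Type*} {Sol : Set (ℝ × (ℝ → S))}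
    {Q R : S → Prop}
    (hrestrict : ∀ p ∈ Sol, ∀ s : ℝ, 0 ≤ s → s ≤ p.1 → (s, p.2) ∈ Sol)
    (hR : ∀ p ∈ Sol, (∀ t ∈ Icc (0:ℝ) p.1, Q (p.2 t)) → R (p.2 p.1))
    {p : ℝ × (ℝ → S)} (hp : p ∈ Sol) (hQ : ∀ t ∈ Icc (0:ℝ) p.1, Q (p.2 t)) :
    ∀ t ∈ Icc (0:ℝ) p.1, R (p.2 t) := fun t ht =>
  hR (t, p.2) (hrestrict p hp t ht.1 ht.2) fun s hs => hQ s ⟨hs.1, hs.2.trans ht.2⟩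

theorem DC_sound_general {S : Type*} (Sol : Set (ℝ × (ℝ → S))) (Q R P : S → Prop)
    (hrestrict : ∀ p ∈ Sol, ∀ s : ℝ, 0 ≤ s → s ≤ p.1 → (s, p.2) ∈ Sol)
    (hR : ∀ p ∈ Sol, (∀ t ∈ Set.Icc (0:ℝ) p.1, Q (p.2 t)) → R (p.2 p.1)) :
    (∀ p ∈ Sol, (∀ t ∈ Set.Icc (0:ℝ) p.1, Q (p.2 t)) → P (p.2 p.1)) ↔
      (∀ p ∈ Sol, (∀ t ∈ Set.Icc (0:ℝ) p.1, Q (p.2 t) ∧ R (p.2 t)) → P (p.2 p.1)) := by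
  constructor
  · intro hP p hp hQR
    exact hP p hp fun t ht => (hQR t ht).1
  · intro hP p hp hQ
    have hR_on_Icc := forall_mem_Icc_of_restrict_endpoint hrestrict hR hp hQ
    exact hP p hp fun t ht => ⟨hQ t ht, hR_on_Icc t ht⟩

theorem DC_sound {S : Type*} (Sol : Set (ℝ × (ℝ → S))) (Q R P : S → Prop)
    (hdur : ∀ p ∈ Sol, 0 ≤ p.1)
    (hrestrict : ∀ p ∈ Sol, ∀ s : ℝ, 0 ≤ s → s ≤ p.1 → (s, p.2) ∈ Sol)
    (hR : ∀ p ∈ Sol, (∀ t ∈ Set.Icc (0:ℝ) p.1, Q (p.2 t)) → R (p.2 p.1)) :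
    (∀ p ∈ Sol, (∀ t ∈ Set.Icc (0:ℝ) p.1, Q (p.2 t)) → P (p.2 p.1)) ↔
      (∀ p ∈ Sol, (∀ t ∈ Set.Icc (0:ℝ) p.1, Q (p.2 t) ∧ R (p.2 t)) → P (p.2 p.1)) :=
  DC_sound_general Sol Q R P hrestrict hR
end

section
/- Soundness of the constant-solution axiom DS (without domain constraint): let f ∈ ℝⁿ be a constant vector and ν ∈ ℝⁿ an initial state, and let P : ℝⁿ → Prop. Then P(φ(s)) holds at the endpoint of every solution φ : [0,s] → ℝⁿ of the ODE x′ = f with φ(0) = ν (i.e. every differentiable φ with φ′(t) = f for all t ∈ [0,s]) if and only if for all t ≥ 0, P(ν + t·f) holds. -/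
open Set

section ConstantVectorField

variable {E : Type*} [NormedAddCommGroup E] [NormedSpace ℝ E]

theorem hasDerivAt_add_sub_smul (x₀ v : E) (a t : ℝ) :
    HasDerivAt (fun u : ℝ => x₀ + (u - a) • v) v t := by
  simpa using (((hasDerivAt_id t).sub_const a).smul_const v).const_add x₀

theorem eq_add_sub_smul_of_hasDerivWithinAt_Icc {φ : ℝ → E} {v : E} {a b : ℝ}
    (hφ : ∀ t ∈ Icc a b, HasDerivWithinAt φ v (Icc a b) t) :
    ∀ t ∈ Icc a b, φ t = φ a + (t - a) • v := by
  have hline := hasDerivAt_add_sub_smul (φ a) v a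
  refine eq_of_has_deriv_right_eq (f' := fun _ => v)
    (fun t ht => (hφ t (mem_Icc_of_Ico ht)).mono_of_mem_nhdsWithin (Icc_mem_nhdsGE_of_mem ht))
    (fun t _ => (hline t).hasDerivWithinAt)
    (fun t ht => (hφ t ht).continuousWithinAt)
    (fun t _ => (hline t).continuousAt.continuousWithinAt) (by simp)

end ConstantVectorField

theorem DS_sound (n : ℕ) (f ν : Fin n → ℝ) (P : (Fin n → ℝ) → Prop) :
    (∀ s : ℝ, 0 ≤ s → ∀ φ : ℝ → (Fin n → ℝ), φ 0 = ν →
        (∀ t ∈ Set.Icc (0:ℝ) s, HasDerivWithinAt φ f (Set.Icc 0 s) t) → P (φ s)) ↔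
      ∀ t : ℝ, 0 ≤ t → P (ν + t • f) := by
  constructor
  · intro h t ht
    simpa using h t ht (fun u => ν + (u - 0) • f) (by simp)
      fun u _ => (hasDerivAt_add_sub_smul ν f 0 u).hasDerivWithinAt
  · intro h s hs φ hφ0 hφ
    have hφs := eq_add_sub_smul_of_hasDerivWithinAt_Icc hφ s (right_mem_Icc.2 hs)
    rw [hφs, hφ0, sub_zero]
    exact h s hs
end
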